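/- For every continuous pair-coloring c on the Cantor space 2^ℕ, there exist a compact set A ⊆ ℕ^ℕ and an almost node-coloring d on A such that hm(c) ≤ hm(d). -/

import Mathlib

/-!
By compactness, for every level `δ` there is a level `M(δ)` beyond which `c` is constant on every
product of cylinders `[x↾M] × [y↾M]` with `Δ(x, y) < δ`; iterating `M` gives a scale, split into
two interleaved block systems. Each system codes `x` into `ℕ^ℕ` by the codes of its restrictions
to the block boundaries, once in a gate copy and once in a value copy. On a gate copy the node
coloring records whether `c` is already constant on the rectangle of the first block where `x`
and `y` split, on a value copy the color `c` takes there. The splitting blocks of the two systems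
are distinct scale levels beyond `Δ(x, y)`, so the later one is decided and `c(x, y)` is a
function of the four node colors: the intersections of pullbacks of a homogeneous cover `F` of
`A` cover the Cantor space by `|F|^4` homogeneous sets. A fifth copy carries the parity of the
splitting level, a reduced coloring, so by the Baire category theorem `F` is uncountable and
`|F|^4 = |F|`.
-/

open Cardinal Topology

/-- The least index where two sequences differ. -/
noncomputable def Delta {α : Type*} (x y : ℕ → α) : ℕ := sInf {n | x n ≠ y n}

/-- A set is homogeneous for a pair-coloring `c` if `c` is constant on pairs of
distinct elements of the set. -/
def IsHomog {X : Type*} (c : X → X → Fin 2) (H : Set X) : Prop :=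
  ∃ i : Fin 2, ∀ x ∈ H, ∀ y ∈ H, x ≠ y → c x y = i

/-- The homogeneity number of a pair-coloring: the least cardinality of a family of
homogeneous sets covering the space. -/
noncomputable def hm {X : Type*} (c : X → X → Fin 2) : Cardinal :=
  sInf { κ | ∃ F : Set (Set X), #F = κ ∧ (∀ H ∈ F, IsHomog c H) ∧ ⋃₀ F = Set.univ }

/-- The homogeneity number of the restriction of a coloring to a subset. -/
noncomputable def hmOn {X : Type*} (c : X → X → Fin 2) (Y : Set X) : Cardinal :=
  sInf { κ | ∃ F : Set (Set X), #F = κ ∧ (∀ H ∈ F, H ⊆ Y ∧ IsHomog c H) ∧ ⋃₀ F = Y }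

/-- A pair-coloring is continuous if it is continuous on `X × X` minus the diagonal. -/
def ContColoring {X : Type*} [TopologicalSpace X] (c : X → X → Fin 2) : Prop :=
  Continuous fun p : {q : X × X // q.1 ≠ q.2} => c p.val.1 p.val.2

/-- Symmetry of a pair-coloring on distinct points. -/
def SymmColoring {X : Type*} (c : X → X → Fin 2) : Prop :=
  ∀ x y : X, x ≠ y → c x y = c y x

/-- A continuous pair-coloring is reduced if no nonempty open set is homogeneous. -/
def Reduced {X : Type*} [TopologicalSpace X] (c : X → X → Fin 2) : Prop :=
  ContColoring c ∧ ∀ U : Set X, IsOpen U → U.Nonempty → ¬ IsHomog c U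

/-- The coloring `c_min` on the Cantor space: the parity of the first difference. -/
noncomputable def cmin : (ℕ → Bool) → (ℕ → Bool) → Fin 2 :=
  fun x y => if Even (Delta x y) then 0 else 1

/-- The coloring `c_parity` on the Baire space: the parity of the first difference. -/
noncomputable def cparity : (ℕ → ℕ) → (ℕ → ℕ) → Fin 2 :=
  fun x y => if Even (Delta x y) then 0 else 1

/-- A pair-coloring on a subset `A` of the Baire space is an almost node-coloring if the
color of a pair `{x, y}` depends only on the restrictions of `x` and `y` to
`Δ(x, y) + 1`. -/
def AlmostNodeColoring (A : Set (ℕ → ℕ)) (d : (ℕ → ℕ) → (ℕ → ℕ) → Fin 2) : Prop :=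
  ∀ x ∈ A, ∀ y ∈ A, ∀ x' ∈ A, ∀ y' ∈ A, x ≠ y → x' ≠ y' →
    (∀ i ≤ Delta x y, x i = x' i ∧ y i = y' i) → d x y = d x' y'

open Set Filter Function PiNat

universe u

section Delta

variable {E : Type*} {x y x' y' : ℕ → E} {n : ℕ}

theorem delta_eq_firstDiff (x y : ℕ → E) : Delta x y = firstDiff x y := by
  obtain rfl | hxy := eq_or_ne x y
  · simp [Delta, firstDiff_def]
  refine le_antisymm (Nat.sInf_le (apply_firstDiff_ne hxy)) (not_lt.1 fun h => ?_)
  exact Nat.sInf_mem (ne_iff.1 hxy) (apply_eq_of_lt_firstDiff h)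

theorem delta_comm (x y : ℕ → E) : Delta x y = Delta y x := by
  simp only [delta_eq_firstDiff, firstDiff_comm]

theorem delta_eq_of_apply_ne (hn : x n ≠ y n) (hxy : x ∈ cylinder y n) : Delta x y = n := by
  have hne : x ≠ y := fun h => hn (congrFun h n)
  rw [delta_eq_firstDiff]
  refine le_antisymm ?_ ((mem_cylinder_iff_le_firstDiff hne n).1 hxy)
  by_contra! h
  exact hn (apply_eq_of_lt_firstDiff h)

theorem delta_eq_of_mem_cylinder (hxy : x ≠ y) (hx : x' ∈ cylinder x (Delta x y + 1))
    (hy : y' ∈ cylinder y (Delta x y + 1)) : Delta x' y' = Delta x y := by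
  have hδ := delta_eq_firstDiff x y
  apply delta_eq_of_apply_ne
  · rw [hx _ (Nat.lt_succ_self _), hy _ (Nat.lt_succ_self _), hδ]
    exact apply_firstDiff_ne hxy
  · intro i hi
    rw [hx i (by omega), hy i (by omega)]
    exact apply_eq_of_lt_firstDiff (hδ ▸ hi)

theorem delta_update {b : E} (hb : b ≠ x n) : Delta x (update x n b) = n :=
  delta_eq_of_apply_ne (by simpa using hb.symm)
    ((mem_cylinder_comm _ _ _).1 (update_mem_cylinder x n b))

theorem notMem_cylinder_iff_delta_lt : x ∉ cylinder y n ↔ x ≠ y ∧ Delta x y < n := by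
  by_cases hxy : x = y
  · simp [hxy]
  · rw [mem_cylinder_iff_le_firstDiff hxy, delta_eq_firstDiff]
    simp [hxy]

end Delta

section Topology

variable {E : Type*} [TopologicalSpace E] [DiscreteTopology E]

theorem hasBasis_nhds_cylinder (x : ℕ → E) : (𝓝 x).HasBasis (fun _ => True) (cylinder x) := by
  refine ⟨fun s => ⟨fun hs => ?_, fun ⟨n, _, hn⟩ => mem_of_superset
    ((isOpen_cylinder _ x n).mem_nhds (self_mem_cylinder x n)) hn⟩⟩
  obtain ⟨_, ⟨z, n, rfl⟩, hx, hs⟩ := (isTopologicalBasis_cylinders _).mem_nhds_iff.1 hs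
  exact ⟨n, trivial, mem_cylinder_iff_eq.1 hx ▸ hs⟩

theorem hasBasis_nhds_prod_cylinder (x y : ℕ → E) :
    (𝓝 (x, y)).HasBasis (fun _ => True) fun n => cylinder x n ×ˢ cylinder y n := by
  rw [nhds_prod_eq]
  exact (hasBasis_nhds_cylinder x).prod_same_index_anti (hasBasis_nhds_cylinder y)
    (fun _ _ _ _ h => cylinder_anti _ h) (fun _ _ _ _ h => cylinder_anti _ h)

end Topology

section Colorings

variable {X : Type*} {c : X → X → Fin 2}

def IsHomogRect (c : X → X → Fin 2) (S T : Set X) : Prop :=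
  ∃ i : Fin 2, ∀ x ∈ S, ∀ y ∈ T, x ≠ y → c x y = i

theorem IsHomogRect.mono {S T S' T' : Set X} (h : IsHomogRect c S T) (hS : S' ⊆ S)
    (hT : T' ⊆ T) : IsHomogRect c S' T' :=
  let ⟨i, hi⟩ := h
  ⟨i, fun x hx y hy => hi x (hS hx) y (hT hy)⟩

theorem IsHomogRect.symm (hsym : SymmColoring c) {S T : Set X} (h : IsHomogRect c S T) :
    IsHomogRect c T S :=
  let ⟨i, hi⟩ := h
  ⟨i, fun x hx y hy hxy => (hsym x y hxy).trans (hi y hy x hx hxy.symm)⟩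

theorem IsHomog.mono {H H' : Set X} (h : IsHomog c H) (hH : H' ⊆ H) : IsHomog c H' :=
  IsHomogRect.mono h hH hH

theorem isHomog_singleton (c : X → X → Fin 2) (a : X) : IsHomog c {a} :=
  ⟨0, fun _ hx _ hy hxy => absurd (hx.trans hy.symm) hxy⟩

theorem exists_cover_card_eq_hm (c : X → X → Fin 2) :
    ∃ F : Set (Set X), #F = hm c ∧ (∀ H ∈ F, IsHomog c H) ∧ ⋃₀ F = Set.univ :=
  csInf_mem (s := {κ | ∃ F : Set (Set X), #F = κ ∧ (∀ H ∈ F, IsHomog c H) ∧ ⋃₀ F = Set.univ})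
    ⟨_, range singleton, rfl, by rintro _ ⟨a, rfl⟩; exact isHomog_singleton c a,
    by rw [sUnion_range, iUnion_singleton_eq_range, range_id']⟩

theorem exists_cover_card_eq_hmOn (c : X → X → Fin 2) (Y : Set X) :
    ∃ F : Set (Set X), #F = hmOn c Y ∧ (∀ H ∈ F, H ⊆ Y ∧ IsHomog c H) ∧ ⋃₀ F = Y :=
  csInf_mem (s := {κ | ∃ F : Set (Set X), #F = κ ∧ (∀ H ∈ F, H ⊆ Y ∧ IsHomog c H) ∧ ⋃₀ F = Y})
    ⟨_, singleton '' Y, rfl,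
    by rintro _ ⟨a, ha, rfl⟩; exact ⟨singleton_subset_iff.2 ha, isHomog_singleton c a⟩,
    by rw [sUnion_image, biUnion_of_singleton]⟩

theorem hm_le_mk {F : Set (Set X)} (hF : ∀ H ∈ F, IsHomog c H) (hcov : ⋃₀ F = Set.univ) :
    hm c ≤ #F :=
  csInf_le' ⟨F, rfl, hF, hcov⟩

/-- Intersections of pullbacks of a `d`-homogeneous cover of `A` are `c`-homogeneous. -/
theorem hm_le_hmOn_pow {X Y ι : Type u} {c : X → X → Fin 2} {d : Y → Y → Fin 2} {A : Set Y}
    (s : ι → X → Y) (hs : ∀ i, Injective (s i)) (hsA : ∀ i x, s i x ∈ A)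
    (f : (ι → Fin 2) → Fin 2) (hf : ∀ x y, x ≠ y → c x y = f fun i => d (s i x) (s i y)) :
    hm c ≤ hmOn d A ^ #ι := by
  obtain ⟨F, hFcard, hF, hcov⟩ := exists_cover_card_eq_hmOn d A
  have hpick : ∀ i x, ∃ H ∈ F, s i x ∈ H := fun i x => mem_sUnion.1 (hcov ▸ hsA i x)
  choose P hPF hP using hpick
  calc hm c ≤ #(range fun H : ι → F => ⋂ i, s i ⁻¹' (H i : Set Y)) := by
        refine hm_le_mk ?_ (eq_univ_of_forall fun x =>
          ⟨_, ⟨fun i => ⟨P i x, hPF i x⟩, rfl⟩, mem_iInter.2 fun i => hP i x⟩)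
        rintro _ ⟨H, rfl⟩
        choose col hcol using fun i => (hF _ (H i).2).2
        refine ⟨f col, fun x hx y hy hxy => (hf x y hxy).trans (congrArg f (funext fun i => ?_))⟩
        exact hcol i _ (mem_iInter.1 hx i) _ (mem_iInter.1 hy i) ((hs i).ne hxy)
    _ ≤ #(ι → F) := mk_range_le
    _ = hmOn d A ^ #ι := by rw [← power_def, hFcard]

variable [TopologicalSpace X]

theorem contColoring_iff_eventually :
    ContColoring c ↔ ∀ x y, x ≠ y → ∀ᶠ q in 𝓝 (x, y), q.1 ≠ q.2 → c q.1 q.2 = c x y := by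
  rw [ContColoring, ← IsLocallyConstant.iff_continuous, IsLocallyConstant.iff_eventually_eq,
    Subtype.forall, Prod.forall]
  refine forall₂_congr fun x y => forall_congr' fun hxy => ?_
  rw [nhds_subtype_eq_comap, eventually_comap]
  exact eventually_congr (Eventually.of_forall fun q =>
    ⟨fun h hq => h ⟨q, hq⟩ rfl, fun h p hp => hp ▸ h (hp ▸ p.2)⟩)

theorem IsHomog.closure [T2Space X] (hc : ContColoring c) {H : Set X} (hH : IsHomog c H) :
    IsHomog c (_root_.closure H) := by
  obtain ⟨i, hi⟩ := hH
  refine ⟨i, fun x hx y hy hxy => ?_⟩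
  have hxy' : (x, y) ∈ _root_.closure (H ×ˢ H) := by
    rw [closure_prod_eq]
    exact ⟨hx, hy⟩
  have hev := (contColoring_iff_eventually.1 hc x y hxy).and
    ((isOpen_ne_fun continuous_fst continuous_snd).mem_nhds hxy)
  obtain ⟨q, hqH, hq, hqne⟩ := ((mem_closure_iff_frequently.1 hxy').and_eventually hev).exists
  rw [← hq hqne]
  exact hi _ hqH.1 _ hqH.2 hqne

theorem aleph0_lt_hm_of_reduced [T2Space X] [BaireSpace X] [Nonempty X] (hc : Reduced c) :
    ℵ₀ < hm c := by
  obtain ⟨F, hFcard, hF, hcov⟩ := exists_cover_card_eq_hm c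
  rw [← hFcard, ← not_le, le_aleph0_iff_set_countable]
  intro hFc
  have := hFc.to_subtype
  have hcov' : ⋃ H : F, closure (H : Set X) = Set.univ :=
    eq_univ_of_forall fun x =>
      let ⟨H, hH, hx⟩ := mem_sUnion.1 (hcov ▸ Set.mem_univ x)
      mem_iUnion.2 ⟨⟨H, hH⟩, subset_closure hx⟩
  obtain ⟨⟨H, hH⟩, hint⟩ := nonempty_interior_of_iUnion_of_closed (fun _ => isClosed_closure) hcov'
  exact hc.2 _ isOpen_interior hint (((hF H hH).closure hc.1).mono interior_subset)

end Colorings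

section Parity

theorem contColoring_cmin : ContColoring cmin := by
  refine contColoring_iff_eventually.2 fun x y hxy => ?_
  refine (hasBasis_nhds_prod_cylinder x y).eventually_iff.2 ⟨Delta x y + 1, trivial, ?_⟩
  rintro ⟨x', y'⟩ ⟨hx', hy'⟩ -
  simp only [cmin, delta_eq_of_mem_cylinder hxy hx' hy']

theorem reduced_cmin : Reduced cmin := by
  refine ⟨contColoring_cmin, fun U hU ⟨z, hz⟩ ⟨i, hi⟩ => ?_⟩
  obtain ⟨n, -, hn⟩ := (hasBasis_nhds_cylinder z).mem_iff.1 (hU.mem_nhds hz)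
  have hflip : ∀ m, n ≤ m → update z m (!z m) ∈ U ∧ z ≠ update z m (!z m) ∧
      cmin z (update z m (!z m)) = if Even m then 0 else 1 := fun m hm =>
    ⟨hn (cylinder_anti z hm (update_mem_cylinder z m _)),
      fun h => by simpa using congrFun h m, by rw [cmin, delta_update (by simp)]⟩
  obtain ⟨h₀, hne₀, hc₀⟩ := hflip n le_rfl
  obtain ⟨h₁, hne₁, hc₁⟩ := hflip (n + 1) (Nat.le_succ n)
  have : (if Even n then 0 else 1 : Fin 2) = if Even (n + 1) then 0 else 1 := by
    rw [← hc₀, ← hc₁, hi z hz _ h₀ hne₀, hi z hz _ h₁ hne₁]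
  rcases Nat.even_or_odd n with h | h <;> simp [h, Nat.even_add_one] at this

end Parity

section Modulus

variable {E : Type*} [TopologicalSpace E] [DiscreteTopology E] {c : (ℕ → E) → (ℕ → E) → Fin 2}

theorem isOpen_of_forall_cylinder_prod_subset {s : Set ((ℕ → E) × (ℕ → E))}
    (h : ∀ p ∈ s, ∃ n, cylinder p.1 n ×ˢ cylinder p.2 n ⊆ s) : IsOpen s :=
  isOpen_iff_mem_nhds.2 fun p hp =>
    let ⟨n, hn⟩ := h p hp
    (hasBasis_nhds_prod_cylinder p.1 p.2).mem_iff.2 ⟨n, trivial, hn⟩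

theorem exists_isHomogRect_cylinder (hc : ContColoring c) {x y : ℕ → E} (hxy : x ≠ y) :
    ∃ n, IsHomogRect c (cylinder x n) (cylinder y n) :=
  let ⟨n, _, hn⟩ := (hasBasis_nhds_prod_cylinder x y).eventually_iff.1
    (contColoring_iff_eventually.1 hc x y hxy)
  ⟨n, c x y, fun _ hx' _ hy' hne => hn (mk_mem_prod hx' hy') hne⟩

theorem exists_isHomogRect_cylinder_of_isCompact (hc : ContColoring c)
    {K : Set ((ℕ → E) × (ℕ → E))} (hK : IsCompact K) (hKoff : ∀ p ∈ K, p.1 ≠ p.2) :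
    ∃ M, ∀ p ∈ K, IsHomogRect c (cylinder p.1 M) (cylinder p.2 M) := by
  let U : ℕ → Set ((ℕ → E) × (ℕ → E)) := fun M =>
    {p | IsHomogRect c (cylinder p.1 M) (cylinder p.2 M)}
  have hUopen : ∀ M, IsOpen (U M) := fun M =>
    isOpen_of_forall_cylinder_prod_subset fun p hp => ⟨M, fun q ⟨hq₁, hq₂⟩ => by
      simpa only [U, mem_ofPred_eq, mem_cylinder_iff_eq.1 hq₁, mem_cylinder_iff_eq.1 hq₂] using hp⟩
  have hUmono : Monotone U := fun _ _ h _ hp =>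
    IsHomogRect.mono hp (cylinder_anti _ h) (cylinder_anti _ h)
  have hKU : K ⊆ ⋃ M, U M := fun p hp => mem_iUnion.2 (exists_isHomogRect_cylinder hc (hKoff p hp))
  exact hK.elim_directed_cover U hUopen hKU hUmono.directed_le

theorem exists_modulus [CompactSpace E] (hc : ContColoring c) (δ : ℕ) :
    ∃ M, ∀ x y, x ∉ cylinder y δ → IsHomogRect c (cylinder x M) (cylinder y M) := by
  have hK : IsClosed {p : (ℕ → E) × (ℕ → E) | p.1 ∉ cylinder p.2 δ} :=
    isOpen_compl_iff.1 <| isOpen_of_forall_cylinder_prod_subset fun p hp =>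
      ⟨δ, fun q ⟨hq₁, hq₂⟩ => by
        simp only [mem_compl_iff, mem_ofPred_eq, not_not, mem_cylinder_iff_eq] at hp hq₁ hq₂ ⊢
        rw [hq₁, hq₂, hp]⟩
  obtain ⟨M, hM⟩ := exists_isHomogRect_cylinder_of_isCompact hc hK.isCompact
    fun p hp h => hp (h ▸ self_mem_cylinder _ _)
  exact ⟨M, fun x y h => hM (x, y) h⟩

variable [CompactSpace E]

noncomputable def modulus (hc : ContColoring c) (δ : ℕ) : ℕ := (exists_modulus hc δ).choose

theorem isHomogRect_modulus (hc : ContColoring c) {δ : ℕ} {x y : ℕ → E} (h : x ∉ cylinder y δ) :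
    IsHomogRect c (cylinder x (modulus hc δ)) (cylinder y (modulus hc δ)) :=
  (exists_modulus hc δ).choose_spec x y h

noncomputable def scale (hc : ContColoring c) : ℕ → ℕ
  | 0 => 0
  | n + 1 => scale hc n + modulus hc (scale hc n) + 1

theorem strictMono_scale (hc : ContColoring c) : StrictMono (scale hc) :=
  strictMono_nat_of_lt_succ fun n => by simp only [scale]; omega

theorem isHomogRect_scale (hc : ContColoring c) {x y : ℕ → E} {a b : ℕ}
    (h : x ∉ cylinder y (scale hc a)) (hab : a < b) :
    IsHomogRect c (cylinder x (scale hc b)) (cylinder y (scale hc b)) := by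
  have hle : modulus hc (scale hc a) ≤ scale hc b :=
    calc modulus hc (scale hc a) ≤ scale hc (a + 1) := by simp only [scale]; omega
      _ ≤ scale hc b := (strictMono_scale hc).monotone hab
  exact (isHomogRect_modulus hc h).mono (cylinder_anti _ hle) (cylinder_anti _ hle)

noncomputable def blocks (hc : ContColoring c) (b : Bool) (j : ℕ) : ℕ :=
  scale hc (2 * j + 1 + b.toNat)

theorem lt_blocks (hc : ContColoring c) (b : Bool) (j : ℕ) : j < blocks hc b j :=
  lt_of_lt_of_le (by omega : j < 2 * j + 1 + b.toNat) ((strictMono_scale hc).id_le _)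

end Modulus

section Coding

variable {E : Type*} [Encodable E] {x y : ℕ → E} {n : ℕ}

def prefixCode (x : ℕ → E) (n : ℕ) : ℕ := Encodable.encode (res x n)

theorem prefixCode_eq_iff : prefixCode x n = prefixCode y n ↔ x ∈ cylinder y n := by
  rw [prefixCode, prefixCode, Encodable.encode_inj, res_eq_res, mem_cylinder_iff]

/-- The cylinder coded by `k`, or `∅` if `k` codes no restriction. -/
def codeCyl (k : ℕ) : Set (ℕ → E) := {x | ∃ n, prefixCode x n = k}

theorem codeCyl_prefixCode (x : ℕ → E) (n : ℕ) : codeCyl (prefixCode x n) = cylinder x n := by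
  ext x'
  refine ⟨fun ⟨m, hm⟩ => ?_, fun h => ⟨n, prefixCode_eq_iff.2 h⟩⟩
  obtain rfl : m = n := by
    simpa using congrArg List.length (Encodable.encode_injective hm)
  exact prefixCode_eq_iff.1 hm

theorem continuous_prefixCode [TopologicalSpace E] [DiscreteTopology E] (n : ℕ) :
    Continuous fun x : ℕ → E => prefixCode x n :=
  IsLocallyConstant.continuous <| (IsLocallyConstant.iff_eventually_eq _).2 fun x =>
    (hasBasis_nhds_cylinder x).eventually_iff.2 ⟨n, trivial, fun _ h => prefixCode_eq_iff.2 h⟩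

def codeMap (t : ℕ) (bl : ℕ → ℕ) (x : ℕ → E) : ℕ → ℕ
  | 0 => t
  | j + 1 => prefixCode x (bl j)

theorem continuous_codeMap [TopologicalSpace E] [DiscreteTopology E] (t : ℕ) (bl : ℕ → ℕ) :
    Continuous (codeMap (E := E) t bl) :=
  continuous_pi fun n => by
    cases n
    exacts [continuous_const, continuous_prefixCode _]

variable {bl : ℕ → ℕ}

theorem codeMap_injective (hbl : ∀ j, j < bl j) (t : ℕ) : Injective (codeMap (E := E) t bl) :=
  fun _ _ h => funext fun i => prefixCode_eq_iff.1 (congrFun h (i + 1)) i (hbl i)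

theorem delta_codeMap (hbl : ∀ j, j < bl j) (hxy : x ≠ y) :
    ∃ j, x ∉ cylinder y (bl j) ∧ ∀ t, Delta (codeMap t bl x) (codeMap t bl y) = j + 1 := by
  classical
  have hex : ∃ j, x ∉ cylinder y (bl j) :=
    ⟨Delta x y, notMem_cylinder_iff_delta_lt.2 ⟨hxy, hbl _⟩⟩
  refine ⟨Nat.find hex, Nat.find_spec hex, fun t => delta_eq_of_apply_ne ?_ ?_⟩
  · exact mt prefixCode_eq_iff.1 (Nat.find_spec hex)
  · rintro (_ | i) hi
    · rfl
    · exact prefixCode_eq_iff.2 (not_not.1 (Nat.find_min hex (Nat.succ_lt_succ_iff.1 hi)))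

theorem delta_codeMap_succ (hxy : x ≠ y) (t : ℕ) :
    Delta (codeMap t Nat.succ x) (codeMap t Nat.succ y) = Delta x y + 1 := by
  refine delta_eq_of_apply_ne ?_ ?_
  · exact mt prefixCode_eq_iff.1 (notMem_cylinder_iff_delta_lt.2 ⟨hxy, Nat.lt_succ_self _⟩)
  · rintro (_ | i) hi
    · rfl
    · refine prefixCode_eq_iff.2 ((mem_cylinder_iff_le_firstDiff hxy _).2 ?_)
      rw [← delta_eq_firstDiff]
      omega

end Coding

section NodeColoring

variable {E : Type*} [Encodable E] {c : (ℕ → E) → (ℕ → E) → Fin 2}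

open Classical in
noncomputable def gateColor (c : (ℕ → E) → (ℕ → E) → Fin 2) (k l : ℕ) : Fin 2 :=
  if IsHomogRect c (codeCyl k) (codeCyl l) then 1 else 0

open Classical in
noncomputable def valueColor (c : (ℕ → E) → (ℕ → E) → Fin 2) (k l : ℕ) : Fin 2 :=
  if ∃ x ∈ codeCyl k, ∃ y ∈ codeCyl l, x ≠ y ∧ c x y = 1 then 1 else 0

noncomputable def nodeColor (c : (ℕ → E) → (ℕ → E) → Fin 2) (D t k l : ℕ) : Fin 2 :=
  if D = 0 then 0 else
    match t with
    | 0 => if Even D then 1 else 0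
    | 1 => gateColor c k l
    | _ => valueColor c k l

noncomputable def nodeColoring (c : (ℕ → E) → (ℕ → E) → Fin 2) (u v : ℕ → ℕ) : Fin 2 :=
  nodeColor c (Delta u v) (u 0) (u (Delta u v)) (v (Delta u v))

theorem almostNodeColoring_of_delta_apply (φ : ℕ → ℕ → ℕ → ℕ → Fin 2) (A : Set (ℕ → ℕ)) :
    AlmostNodeColoring A fun u v => φ (Delta u v) (u 0) (u (Delta u v)) (v (Delta u v)) := by
  intro x _ y _ x' _ y' _ hxy _ h
  have hD : Delta x' y' = Delta x y := delta_eq_of_mem_cylinder hxy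
    (fun i hi => (h i (Nat.lt_succ_iff.1 hi)).1.symm)
    (fun i hi => (h i (Nat.lt_succ_iff.1 hi)).2.symm)
  simp only [hD, (h 0 (Nat.zero_le _)).1, (h _ le_rfl).1, (h _ le_rfl).2]

theorem gateColor_comm (hsym : SymmColoring c) (k l : ℕ) : gateColor c k l = gateColor c l k := by
  classical
  exact if_congr ⟨IsHomogRect.symm hsym, IsHomogRect.symm hsym⟩ rfl rfl

theorem valueColor_comm (hsym : SymmColoring c) (k l : ℕ) :
    valueColor c k l = valueColor c l k := by
  classical
  refine if_congr ⟨?_, ?_⟩ rfl rfl <;>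
    exact fun ⟨x, hx, y, hy, hxy, h⟩ => ⟨y, hy, x, hx, hxy.symm, (hsym y x hxy.symm).trans h⟩

theorem nodeColor_comm (hsym : SymmColoring c) (D t k l : ℕ) :
    nodeColor c D t k l = nodeColor c D t l k := by
  unfold nodeColor
  rw [gateColor_comm hsym k l, valueColor_comm hsym k l]

theorem nodeColoring_comm (hsym : SymmColoring c) (u v : ℕ → ℕ) :
    nodeColoring c u v = nodeColoring c v u := by
  unfold nodeColoring
  rw [delta_comm v u, nodeColor_comm hsym]
  obtain hD | hD := eq_or_ne (Delta u v) 0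
  · simp [nodeColor, hD]
  · rw [show u 0 = v 0 from
      apply_eq_of_lt_firstDiff (delta_eq_firstDiff u v ▸ Nat.pos_of_ne_zero hD)]

end NodeColoring

section Transfer

variable {E : Type*} [Encodable E] {c : (ℕ → E) → (ℕ → E) → Fin 2} {x y : ℕ → E} {bl : ℕ → ℕ}

theorem valueColor_prefixCode {N : ℕ} (hxy : x ≠ y)
    (h : IsHomogRect c (cylinder x N) (cylinder y N)) :
    valueColor c (prefixCode x N) (prefixCode y N) = c x y := by
  obtain ⟨i, hi⟩ := h
  have hi' : ∀ x' ∈ cylinder x N, ∀ y' ∈ cylinder y N, x' ≠ y' → c x' y' = c x y :=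
    fun x' hx' y' hy' hne => (hi x' hx' y' hy' hne).trans
      (hi x (self_mem_cylinder x N) y (self_mem_cylinder y N) hxy).symm
  unfold valueColor
  split_ifs with hex <;> rw [codeCyl_prefixCode, codeCyl_prefixCode] at hex
  · obtain ⟨x', hx', y', hy', hne, h1⟩ := hex
    rw [← hi' x' hx' y' hy' hne, h1]
  · by_contra h0
    exact hex ⟨x, self_mem_cylinder x N, y, self_mem_cylinder y N, hxy,
      Fin.eq_one_of_ne_zero _ (Ne.symm h0)⟩

theorem exists_gate_value (hbl : ∀ j, j < bl j) (hxy : x ≠ y) :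
    ∃ j, x ∉ cylinder y (bl j) ∧
      (nodeColoring c (codeMap 1 bl x) (codeMap 1 bl y) = 1 ↔
        IsHomogRect c (cylinder x (bl j)) (cylinder y (bl j))) ∧
      (IsHomogRect c (cylinder x (bl j)) (cylinder y (bl j)) →
        nodeColoring c (codeMap 2 bl x) (codeMap 2 bl y) = c x y) := by
  classical
  obtain ⟨j, hj, hD⟩ := delta_codeMap hbl hxy
  refine ⟨j, hj, ?_, fun h => ?_⟩
  · simp only [nodeColoring, hD, nodeColor, codeMap, gateColor, codeCyl_prefixCode]
    split_ifs <;> simp_all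
  · simpa only [nodeColoring, hD, nodeColor, codeMap, Nat.add_one_ne_zero, if_false] using
      valueColor_prefixCode hxy h

end Transfer

section Staggered

variable {E : Type*} [TopologicalSpace E] [DiscreteTopology E] [CompactSpace E] [Encodable E]
  {c : (ℕ → E) → (ℕ → E) → Fin 2}

/-- `i.1` selects the block system, `i.2` the gate (tag `1`) or the value (tag `2`) copy. -/
noncomputable def piece (hc : ContColoring c) (i : Bool × Bool) : (ℕ → E) → ℕ → ℕ :=
  codeMap (bif i.2 then 2 else 1) (blocks hc i.1)

/-- Two splitting blocks from different systems are different levels of the scale, and `c` is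
homogeneous on the rectangle of the later one; so at least one gate is open. -/
theorem eq_ite_gate (hc : ContColoring c) {x y : ℕ → E} (hxy : x ≠ y) :
    c x y = if nodeColoring c (codeMap 1 (blocks hc false) x) (codeMap 1 (blocks hc false) y) = 1
      then nodeColoring c (codeMap 2 (blocks hc false) x) (codeMap 2 (blocks hc false) y)
      else nodeColoring c (codeMap 2 (blocks hc true) x) (codeMap 2 (blocks hc true) y) := by
  obtain ⟨j₀, hs₀, hg₀, hv₀⟩ := exists_gate_value (c := c) (lt_blocks hc false) hxy
  obtain ⟨j₁, hs₁, -, hv₁⟩ := exists_gate_value (c := c) (lt_blocks hc true) hxy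
  split_ifs with h
  · exact (hv₀ (hg₀.1 h)).symm
  · refine (hv₁ ?_).symm
    have hne : 2 * j₀ + 1 + false.toNat ≠ 2 * j₁ + 1 + true.toNat := by
      simp only [Bool.toNat_false, Bool.toNat_true]
      omega
    rcases hne.lt_or_gt with hlt | hlt
    · exact isHomogRect_scale hc hs₀ hlt
    · exact absurd (hg₀.2 (isHomogRect_scale hc hs₁ hlt)) h

end Staggered

section Cantor

variable {c : (ℕ → Bool) → (ℕ → Bool) → Fin 2}

theorem nodeColoring_codeMap_succ {x y : ℕ → Bool} (hxy : x ≠ y) :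
    nodeColoring c (codeMap 0 Nat.succ x) (codeMap 0 Nat.succ y) = cmin x y := by
  simp only [nodeColoring, delta_codeMap_succ hxy, nodeColor, codeMap, cmin, Nat.even_add_one]
  split_ifs <;> simp_all

theorem aleph0_le_hmOn_nodeColoring {A : Set (ℕ → ℕ)}
    (hA : range (codeMap (E := Bool) 0 Nat.succ) ⊆ A) :
    ℵ₀ ≤ hmOn (nodeColoring c) A := by
  have h := hm_le_hmOn_pow (c := cmin) (d := nodeColoring c) (fun _ : Unit => codeMap 0 Nat.succ)
    (fun _ => codeMap_injective Nat.lt_succ_self 0) (fun _ x => hA ⟨x, rfl⟩) (fun v => v ())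
    fun x y hxy => (nodeColoring_codeMap_succ hxy).symm
  rw [mk_fintype, Fintype.card_unit, Nat.cast_one, power_one] at h
  exact (aleph0_lt_hm_of_reduced reduced_cmin).le.trans h

theorem hm_le_hmOn_nodeColoring (hc : ContColoring c) {A : Set (ℕ → ℕ)}
    (hparity : range (codeMap (E := Bool) 0 Nat.succ) ⊆ A) (hpiece : ∀ i, range (piece hc i) ⊆ A) :
    hm c ≤ hmOn (nodeColoring c) A :=
  calc hm c ≤ hmOn (nodeColoring c) A ^ #(Bool × Bool) :=
        hm_le_hmOn_pow (piece hc) (fun i => codeMap_injective (lt_blocks hc i.1) _)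
          (fun i x => hpiece i ⟨x, rfl⟩)
          (fun v => if v (false, false) = 1 then v (false, true) else v (true, true))
          fun x y hxy => eq_ite_gate hc hxy
    _ = hmOn (nodeColoring c) A ^ (4 : ℕ) := by simp [← power_natCast]
    _ ≤ hmOn (nodeColoring c) A := power_nat_le (aleph0_le_hmOn_nodeColoring hparity)

end Cantor

/-- For every continuous pair-coloring `c` on the Cantor space there are a compact set
`A ⊆ ℕ^ℕ` and an almost node-coloring `d` on `A` with `hm(c) ≤ hm(d)`. -/
theorem stmt6 (c : (ℕ → Bool) → (ℕ → Bool) → Fin 2)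
    (hsym : SymmColoring c) (hcont : ContColoring c) :
    ∃ (A : Set (ℕ → ℕ)) (d : (ℕ → ℕ) → (ℕ → ℕ) → Fin 2),
      IsCompact A ∧ (∀ x ∈ A, ∀ y ∈ A, x ≠ y → d x y = d y x) ∧
      AlmostNodeColoring A d ∧ hm c ≤ hmOn d A := by
  let A := range (codeMap (E := Bool) 0 Nat.succ) ∪ ⋃ i, range (piece hcont i)
  refine ⟨A, nodeColoring c, ?_, fun u _ v _ _ => nodeColoring_comm hsym u v,
    almostNodeColoring_of_delta_apply _ A, hm_le_hmOn_nodeColoring hcont subset_union_left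
      fun i => subset_union_of_subset_right (subset_iUnion (fun i => range (piece hcont i)) i) _⟩
  exact (isCompact_range (continuous_codeMap _ _)).union
    (isCompact_iUnion fun i => isCompact_range (continuous_codeMap _ _))
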